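/- arXiv:2306.07975 — 4 statements merged into one kernel-verified Lean document; each statement's English description precedes it below -/
import Mathlib

section
/- For finite alphabets, conditional PMFs p_{X|Y}, q_{X|Y} with strictly positive entries, a PMF p_Y, and any order α > 1, the n1-conditional Rényi divergence is bounded above by the Bleuler–Lapidoth–Pfister conditional Rényi divergence: D^{n1}_α(p_{X|Y}||q_{X|Y}|p_Y) ≤ D^{BLP}_α(p_{X|Y}||q_{X|Y}|p_Y). -/
open Finset

/-!
Write `f x y = p(y) p(x|y) q(x|y)^((1-α)/α)`. The n1-divergence is governed by the `ℓ^α`-norm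
of the sum `∑_y f(·, y)`, the BLP-divergence by the sum of the `ℓ^α`-norms of the `f(·, y)`,
since `‖f(·, y)‖_α = p(y) (∑_x p(x|y)^α q(x|y)^(1-α))^(1/α)`. Minkowski's inequality compares
the two, and taking logarithms turns it into the claimed bound.
-/

namespace Real

variable {ι κ : Type*} {p : ℝ}

theorem Lp_sum_le_sum_Lp_of_nonneg (hp : 1 ≤ p) (s : Finset ι) (t : Finset κ) {f : κ → ι → ℝ}
    (hf : ∀ k ∈ t, ∀ i ∈ s, 0 ≤ f k i) :
    (∑ i ∈ s, (∑ k ∈ t, f k i) ^ p) ^ (1 / p) ≤ ∑ k ∈ t, (∑ i ∈ s, f k i ^ p) ^ (1 / p) := by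
  have hp₀ : p ≠ 0 := by positivity
  induction t using Finset.cons_induction with
  | empty => simp [zero_rpow hp₀, zero_rpow (inv_ne_zero hp₀)]
  | cons k t hk ih =>
    simp only [sum_cons] at hf ⊢
    calc (∑ i ∈ s, (f k i + ∑ l ∈ t, f l i) ^ p) ^ (1 / p)
        ≤ (∑ i ∈ s, f k i ^ p) ^ (1 / p) + (∑ i ∈ s, (∑ l ∈ t, f l i) ^ p) ^ (1 / p) :=
          Lp_add_le_of_nonneg s hp (hf k (mem_cons_self k t))
            fun i hi => sum_nonneg fun l hl => hf l (mem_cons_of_mem hl) i hi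
      _ ≤ _ := by gcongr; exact ih fun l hl => hf l (mem_cons_of_mem hl)

theorem Lp_const_mul {c : ℝ} (hc : 0 ≤ c) (hp : p ≠ 0) (s : Finset ι) {g : ι → ℝ}
    (hg : ∀ i ∈ s, 0 ≤ g i) :
    (∑ i ∈ s, (c * g i) ^ p) ^ (1 / p) = c * (∑ i ∈ s, g i ^ p) ^ (1 / p) := by
  rw [sum_congr rfl fun i hi => mul_rpow hc (hg i hi), ← mul_sum,
    mul_rpow (rpow_nonneg hc p) (sum_nonneg fun i hi => rpow_nonneg (hg i hi) p),
    one_div, rpow_rpow_inv hc hp]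

theorem mul_rpow_div_rpow {a b : ℝ} (ha : 0 ≤ a) (hb : 0 ≤ b) (β : ℝ) (hp : p ≠ 0) :
    (a * b ^ (β / p)) ^ p = a ^ p * b ^ β := by
  rw [mul_rpow ha (rpow_nonneg hb _), ← rpow_mul hb, div_mul_cancel₀ β hp]

end Real

open Real

theorem n1_le_BLP_general
    {X Y : Type} [Fintype X] [Fintype Y] [Nonempty X] [Nonempty Y]
    (α : ℝ) (hα : 1 < α)
    (cp cq : X → Y → ℝ) (pY : Y → ℝ)
    (hcp_pos : ∀ x y, 0 < cp x y)
    (hcq_pos : ∀ x y, 0 < cq x y)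
    (hpY_pos : ∀ y, 0 < pY y) :
    (1 / (α - 1)) *
        Real.log (∑ x, (∑ y, pY y * cp x y * (cq x y) ^ ((1 - α) / α)) ^ α)
      ≤ (α / (α - 1)) *
        Real.log (∑ y, pY y * (∑ x, (cp x y) ^ α * (cq x y) ^ (1 - α)) ^ (1 / α)) := by
  have hα₀ : α ≠ 0 := by positivity
  set f : Y → X → ℝ := fun y x => pY y * (cp x y * cq x y ^ ((1 - α) / α))
  have hf : ∀ y x, 0 < f y x := fun y x =>
    mul_pos (hpY_pos y) (mul_pos (hcp_pos x y) (rpow_pos_of_pos (hcq_pos x y) _))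
  set S := ∑ x, (∑ y, f y x) ^ α with hS
  have hS_pos : 0 < S :=
    sum_pos (fun x _ => rpow_pos_of_pos (sum_pos (fun y _ => hf y x) univ_nonempty) α)
      univ_nonempty
  have hnorm : ∀ y, (∑ x, f y x ^ α) ^ (1 / α)
      = pY y * (∑ x, cp x y ^ α * cq x y ^ (1 - α)) ^ (1 / α) := fun y => by
    rw [Lp_const_mul (hpY_pos y).le hα₀ _ fun x _ => (mul_pos (hcp_pos x y)
      (rpow_pos_of_pos (hcq_pos x y) _)).le]
    simp only [mul_rpow_div_rpow (hcp_pos _ y).le (hcq_pos _ y).le _ hα₀]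
  have hminkowski : S ^ (1 / α) ≤ ∑ y, (∑ x, f y x ^ α) ^ (1 / α) :=
    Lp_sum_le_sum_Lp_of_nonneg hα.le _ _ fun y _ x _ => (hf y x).le
  simp only [hnorm] at hminkowski
  simp only [f, ← mul_assoc] at hS
  rw [← hS]
  calc 1 / (α - 1) * Real.log S = α / (α - 1) * Real.log (S ^ (1 / α)) := by
        rw [Real.log_rpow hS_pos]; field_simp
    _ ≤ _ := by gcongr

/-- For order `α > 1`, the n1-conditional Rényi divergence is bounded
above by the Bleuler–Lapidoth–Pfister conditional Rényi divergence:
`D^{n1}_α(p_{X|Y}‖q_{X|Y}|p_Y) ≤ D^{BLP}_α(p_{X|Y}‖q_{X|Y}|p_Y)`. -/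
theorem n1_le_BLP
    {X Y : Type} [Fintype X] [Fintype Y] [Nonempty X] [Nonempty Y]
    (α : ℝ) (hα : 1 < α)
    (cp cq : X → Y → ℝ) (pY : Y → ℝ)
    (hcp_pos : ∀ x y, 0 < cp x y) (hcp_sum : ∀ y, ∑ x, cp x y = 1)
    (hcq_pos : ∀ x y, 0 < cq x y) (hcq_sum : ∀ y, ∑ x, cq x y = 1)
    (hpY_pos : ∀ y, 0 < pY y) (hpY_sum : ∑ y, pY y = 1) :
    (1 / (α - 1)) *
        Real.log (∑ x, (∑ y, pY y * cp x y * (cq x y) ^ ((1 - α) / α)) ^ α)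
      ≤ (α / (α - 1)) *
        Real.log (∑ y, pY y * (∑ x, (cp x y) ^ α * (cq x y) ^ (1 - α)) ^ (1 / α)) :=
  n1_le_BLP_general α hα cp cq pY hcp_pos hcq_pos hpY_pos
end

section
/- Decomposition of the log-certainty-equivalent with bookmaker's side information: for R ∈ (0,1) ∪ (1,∞), a strictly positive joint PMF p_{XY}, positive fair odds o_{X|Y} (i.e., Σ_x o(x|y)^{−1} = 1 for all y), and a strictly positive betting PMF b_X, one has (1/(1−R)) ln[Σ_{x,y} (b(x) o(x|y))^{1−R} p(x,y)] = D^{n1}_{1/R}(p_{X|Y} || r_{X|Y} | p_Y) − D_R(h_X || b_X), where r(x|y) := o(x|y)^{−1} and h(x) := (Σ_y p(x,y) o(x|y)^{1−R})^{1/R} / Σ_{x'} (Σ_y p(x',y) o(x'|y)^{1−R})^{1/R}. -/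
open Finset

/-! With `S x = Σ_y p(x,y) o(x|y)^{1−R}` the certainty-equivalent sum is `A = Σ_x S x · b(x)^{1−R}`,
and after cancelling `p(y) · p(x|y) = p(x,y)` and `r^{(1−1/R)/(1/R)} = o^{1−R}` the conditional
divergence term is a function of `T = Σ_x (S x)^{1/R}` alone, while the Rényi term is a function
of `A / T^R`. The decomposition is then the identity
`log A / (1−R) = R log T / (1−R) − log (A / T^R) / (R−1)`. -/

lemma Real.inv_rpow_conjugate_exponent {o R : ℝ} (ho : 0 ≤ o) (hR : R ≠ 0) :
    o⁻¹ ^ ((1 - 1 / R) / (1 / R)) = o ^ (1 - R) := by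
  have hexp : (1 - 1 / R) / (1 / R) = -(1 - R) := by field_simp; ring
  rw [hexp, Real.inv_rpow ho, ← Real.rpow_neg ho, neg_neg]

lemma sum_marginal_mul_conditional {X Y : Type} [Fintype X] [Fintype Y] (p : X → Y → ℝ)
    (f : X → Y → ℝ) (hp : ∀ y, ∑ x', p x' y ≠ 0) (x : X) :
    ∑ y, (∑ x', p x' y) * (p x y / ∑ x', p x' y) * f x y = ∑ y, p x y * f x y := by
  refine sum_congr rfl fun y _ => ?_
  rw [mul_div_cancel₀ _ (hp y)]

lemma sum_sum_mul_rpow_mul_eq_sum_mul {X Y : Type} [Fintype X] [Fintype Y] (e : ℝ)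
    (p o : X → Y → ℝ) (b : X → ℝ) (ho : ∀ x y, 0 ≤ o x y) (hb : ∀ x, 0 ≤ b x) :
    ∑ x, ∑ y, (b x * o x y) ^ e * p x y = ∑ x, (∑ y, p x y * o x y ^ e) * b x ^ e := by
  refine sum_congr rfl fun x _ => ?_
  rw [sum_mul]
  refine sum_congr rfl fun y _ => ?_
  rw [Real.mul_rpow (hb x) (ho x y)]
  ring

lemma sum_normalized_rpow_mul {X : Type} (s : Finset X) (S c : X → ℝ) {R T : ℝ}
    (hS : ∀ x, 0 ≤ S x) (hT : 0 ≤ T) (hR : R ≠ 0) :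
    ∑ x ∈ s, (S x ^ (1 / R) / T) ^ R * c x = (∑ x ∈ s, S x * c x) / T ^ R := by
  rw [sum_div]
  refine sum_congr rfl fun x _ => ?_
  rw [Real.div_rpow (Real.rpow_nonneg (hS x) _) hT, ← Real.rpow_mul (hS x),
    one_div_mul_cancel hR, Real.rpow_one]
  ring

lemma Real.log_eq_conjugate_sub_log_div_rpow {A T R : ℝ} (hA : 0 < A) (hT : 0 < T)
    (hR0 : R ≠ 0) (hR1 : R ≠ 1) :
    1 / (1 - R) * Real.log A
      = 1 / (1 / R - 1) * Real.log T - 1 / (R - 1) * Real.log (A / T ^ R) := by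
  have h1R : 1 - R ≠ 0 := sub_ne_zero.mpr (Ne.symm hR1)
  have hR1' : R - 1 ≠ 0 := sub_ne_zero.mpr hR1
  have hconj : 1 / (1 / R - 1) = R / (1 - R) := by field_simp
  have hneg : 1 / (R - 1) = -(1 / (1 - R)) := by field_simp; ring
  rw [Real.log_div hA.ne' (Real.rpow_pos_of_pos hT R).ne', Real.log_rpow hT, hconj, hneg]
  ring

theorem bookmaker_side_info_decomposition_general
    {X Y : Type} [Fintype X] [Fintype Y] [Nonempty X] [Nonempty Y]
    (R : ℝ) (hR0 : 0 < R) (hR1 : R ≠ 1)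
    (p : X → Y → ℝ) (o : X → Y → ℝ) (b : X → ℝ)
    (hp_pos : ∀ x y, 0 < p x y)
    (ho_pos : ∀ x y, 0 < o x y)
    (hb_pos : ∀ x, 0 < b x) :
    (1 / (1 - R)) * Real.log (∑ x, ∑ y, (b x * o x y) ^ (1 - R) * p x y)
      = (1 / (1 / R - 1)) *
          Real.log (∑ x, (∑ y, (∑ x', p x' y) * (p x y / ∑ x', p x' y) *
            ((o x y)⁻¹) ^ ((1 - 1 / R) / (1 / R))) ^ (1 / R))
        - (1 / (R - 1)) *
          Real.log (∑ x,
            ((∑ y, p x y * (o x y) ^ (1 - R)) ^ (1 / R) /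
              ∑ x', (∑ y, p x' y * (o x' y) ^ (1 - R)) ^ (1 / R)) ^ R * (b x) ^ (1 - R)) := by
  set S : X → ℝ := fun x => ∑ y, p x y * o x y ^ (1 - R)
  have hS : ∀ x, 0 < S x := fun x =>
    sum_pos (fun y _ => mul_pos (hp_pos x y) (Real.rpow_pos_of_pos (ho_pos x y) _)) univ_nonempty
  have hT : 0 < ∑ x, S x ^ (1 / R) :=
    sum_pos (fun x _ => Real.rpow_pos_of_pos (hS x) _) univ_nonempty
  have hA : 0 < ∑ x, S x * b x ^ (1 - R) :=
    sum_pos (fun x _ => mul_pos (hS x) (Real.rpow_pos_of_pos (hb_pos x) _)) univ_nonempty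
  have hmarg : ∀ y, ∑ x', p x' y ≠ 0 := fun y =>
    (sum_pos (fun x' _ => hp_pos x' y) univ_nonempty).ne'
  have hcond : ∀ x, ∑ y, (∑ x', p x' y) * (p x y / ∑ x', p x' y) *
      (o x y)⁻¹ ^ ((1 - 1 / R) / (1 / R)) = S x := fun x => by
    simp only [Real.inv_rpow_conjugate_exponent (ho_pos x _).le hR0.ne']
    exact sum_marginal_mul_conditional p (fun x y => o x y ^ (1 - R)) hmarg x
  simp only [hcond]
  rw [sum_sum_mul_rpow_mul_eq_sum_mul _ p o b (fun x y => (ho_pos x y).le) (fun x => (hb_pos x).le),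
    sum_normalized_rpow_mul univ S _ (fun x => (hS x).le) hT.le hR0.ne']
  exact Real.log_eq_conjugate_sub_log_div_rpow hA hT hR0.ne' hR1

/-- Decomposition of the log isoelastic certainty equivalent for
betting with bookmaker's side information. For risk aversion `R ∈ (0,1) ∪ (1,∞)`,
a strictly positive joint PMF `p_{XY}`, positive fair odds `o_{X|Y}`
(`Σ_x o(x|y)⁻¹ = 1` for all `y`), and a strictly positive betting PMF `b_X`:
`(1/(1−R)) ln[Σ_{x,y} (b(x)o(x|y))^{1−R} p(x,y)]
   = D^{n1}_{1/R}(p_{X|Y}‖r_{X|Y}|p_Y) − D_R(h_X‖b_X)`,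
where `p(y) = Σ_x p(x,y)`, `p(x|y) = p(x,y)/p(y)`, `r(x|y) = o(x|y)⁻¹`, and
`h(x) = (Σ_y p(x,y) o(x|y)^{1−R})^{1/R} / Σ_{x'} (Σ_y p(x',y) o(x'|y)^{1−R})^{1/R}`. -/
theorem bookmaker_side_info_decomposition
    {X Y : Type} [Fintype X] [Fintype Y] [Nonempty X] [Nonempty Y]
    (R : ℝ) (hR0 : 0 < R) (hR1 : R ≠ 1)
    (p : X → Y → ℝ) (o : X → Y → ℝ) (b : X → ℝ)
    (hp_pos : ∀ x y, 0 < p x y) (hp_sum : ∑ x, ∑ y, p x y = 1)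
    (ho_pos : ∀ x y, 0 < o x y) (ho_fair : ∀ y, ∑ x, (o x y)⁻¹ = 1)
    (hb_pos : ∀ x, 0 < b x) (hb_sum : ∑ x, b x = 1) :
    (1 / (1 - R)) * Real.log (∑ x, ∑ y, (b x * o x y) ^ (1 - R) * p x y)
      = (1 / (1 / R - 1)) *
          Real.log (∑ x, (∑ y, (∑ x', p x' y) * (p x y / ∑ x', p x' y) *
            ((o x y)⁻¹) ^ ((1 - 1 / R) / (1 / R))) ^ (1 / R))
        - (1 / (R - 1)) *
          Real.log (∑ x,
            ((∑ y, p x y * (o x y) ^ (1 - R)) ^ (1 / R) /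
              ∑ x', (∑ y, p x' y * (o x' y) ^ (1 - R)) ^ (1 / R)) ^ R * (b x) ^ (1 - R)) :=
  bookmaker_side_info_decomposition_general R hR0 hR1 p o b hp_pos ho_pos hb_pos
end

section
/- Optimal bet against a bookmaker with side information: under the assumptions of the decomposition (R ∈ (0,1) ∪ (1,∞), positive fair odds o_{X|Y}, strictly positive p_{XY}), the maximum over betting PMFs b_X of (1/(1−R)) ln[Σ_{x,y} (b(x) o(x|y))^{1−R} p(x,y)] equals D^{n1}_{1/R}(p_{X|Y}||r_{X|Y}|p_Y), attained at b_X = h_X with h(x) = (Σ_y p(x,y) o(x|y)^{1−R})^{1/R} / Σ_{x'} (Σ_y p(x',y) o(x'|y)^{1−R})^{1/R}. -/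
/-!
With `A x = ∑ y, p x y * o x y ^ (1 - R)`, the objective of a bet `b` is
`1/(1-R) * log ∑ x, b x ^ (1 - R) * A x`. Writing `A = S ^ R * h ^ R`, where
`S = ∑ x, A x ^ (1/R)` and `h` is the normalisation of `A ^ (1/R)` (the escort distribution of
order `1/R`), the objective becomes `R/(1-R) * log S - D_R(h‖b)`. Jensen's inequality for
`t ↦ t ^ R` (concave for `R < 1`, convex for `R > 1`) gives `D_R(h‖b) ≥ 0`, with equality at
`b = h`; and `R/(1-R) * log S` is the conditional Rényi divergence `D^{n1}_{1/R}(p_{X|Y}‖o⁻¹|p_Y)`.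
-/

open Finset Real

section Renyi

variable {X : Type*} [Fintype X]

noncomputable def renyiDiv (α : ℝ) (h b : X → ℝ) : ℝ :=
  (α - 1)⁻¹ * log (∑ x, h x ^ α * b x ^ (1 - α))

lemma rpow_mul_rpow_one_sub_eq_mul_rpow_div {α h b : ℝ} (hh : 0 ≤ h) (hb : 0 < b) :
    h ^ α * b ^ (1 - α) = b * (h / b) ^ α := by
  rw [div_rpow hh hb.le, rpow_sub hb, rpow_one]
  ring

lemma sum_mul_div_eq_one {h b : X → ℝ} (hb : ∀ x, 0 < b x) (hh1 : ∑ x, h x = 1) :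
    ∑ x, b x • (h x / b x) = 1 := by
  rw [← hh1]
  exact sum_congr rfl fun x _ => mul_div_cancel₀ _ (hb x).ne'

variable {h b : X → ℝ}

lemma sum_rpow_mul_rpow_one_sub_le_one {α : ℝ} (hα0 : 0 ≤ α) (hα1 : α ≤ 1)
    (hh : ∀ x, 0 ≤ h x) (hb : ∀ x, 0 < b x) (hh1 : ∑ x, h x = 1) (hb1 : ∑ x, b x = 1) :
    ∑ x, h x ^ α * b x ^ (1 - α) ≤ 1 :=
  calc ∑ x, h x ^ α * b x ^ (1 - α) = ∑ x, b x • (h x / b x) ^ α := by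
        simp_rw [smul_eq_mul, rpow_mul_rpow_one_sub_eq_mul_rpow_div (hh _) (hb _)]
    _ ≤ (∑ x, b x • (h x / b x)) ^ α :=
        (concaveOn_rpow hα0 hα1).le_map_sum (fun x _ => (hb x).le) hb1
          fun x _ => div_nonneg (hh x) (hb x).le
    _ = 1 := by rw [sum_mul_div_eq_one hb hh1, one_rpow]

lemma one_le_sum_rpow_mul_rpow_one_sub {α : ℝ} (hα1 : 1 ≤ α)
    (hh : ∀ x, 0 ≤ h x) (hb : ∀ x, 0 < b x) (hh1 : ∑ x, h x = 1) (hb1 : ∑ x, b x = 1) :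
    1 ≤ ∑ x, h x ^ α * b x ^ (1 - α) :=
  calc 1 = (∑ x, b x • (h x / b x)) ^ α := by rw [sum_mul_div_eq_one hb hh1, one_rpow]
    _ ≤ ∑ x, b x • (h x / b x) ^ α :=
        (convexOn_rpow hα1).map_sum_le (fun x _ => (hb x).le) hb1
          fun x _ => div_nonneg (hh x) (hb x).le
    _ = ∑ x, h x ^ α * b x ^ (1 - α) := by
        simp_rw [smul_eq_mul, rpow_mul_rpow_one_sub_eq_mul_rpow_div (hh _) (hb _)]

lemma renyiDiv_nonneg {α : ℝ} (hα0 : 0 ≤ α)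
    (hh : ∀ x, 0 ≤ h x) (hb : ∀ x, 0 < b x) (hh1 : ∑ x, h x = 1) (hb1 : ∑ x, b x = 1) :
    0 ≤ renyiDiv α h b := by
  rcases le_or_gt α 1 with hα1 | hα1
  · exact mul_nonneg_of_nonpos_of_nonpos (inv_nonpos.2 (by linarith))
      (log_nonpos (sum_nonneg fun x _ => mul_nonneg (rpow_nonneg (hh x) _)
        (rpow_nonneg (hb x).le _)) (sum_rpow_mul_rpow_one_sub_le_one hα0 hα1 hh hb hh1 hb1))
  · exact mul_nonneg (inv_nonneg.2 (by linarith))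
      (log_nonneg (one_le_sum_rpow_mul_rpow_one_sub hα1.le hh hb hh1 hb1))

lemma renyiDiv_self (α : ℝ) (hh : ∀ x, 0 < h x) (hh1 : ∑ x, h x = 1) :
    renyiDiv α h h = 0 := by
  have hsum : ∑ x, h x ^ α * h x ^ (1 - α) = 1 := by
    simp_rw [← rpow_add (hh _), add_sub_cancel, rpow_one, hh1]
  rw [renyiDiv, hsum, log_one, mul_zero]

end Renyi

section Escort

variable {X : Type*} [Fintype X] [Nonempty X] {A : X → ℝ}

noncomputable def escort (q : ℝ) (A : X → ℝ) (x : X) : ℝ :=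
  A x ^ q / ∑ x', A x' ^ q

lemma sum_rpow_pos (q : ℝ) (hA : ∀ x, 0 < A x) : 0 < ∑ x, A x ^ q :=
  sum_pos (fun x _ => rpow_pos_of_pos (hA x) q) univ_nonempty

lemma escort_pos (q : ℝ) (hA : ∀ x, 0 < A x) (x : X) : 0 < escort q A x :=
  div_pos (rpow_pos_of_pos (hA x) q) (sum_rpow_pos q hA)

lemma sum_escort (q : ℝ) (hA : ∀ x, 0 < A x) : ∑ x, escort q A x = 1 := by
  simp_rw [escort, ← sum_div]
  exact div_self (sum_rpow_pos q hA).ne'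

lemma escort_one_div_rpow {R : ℝ} (hR : R ≠ 0) (hA : ∀ x, 0 < A x) (x : X) :
    escort (1 / R) A x ^ R = A x / (∑ x', A x' ^ (1 / R)) ^ R := by
  rw [escort, div_rpow (rpow_nonneg (hA x).le _) (sum_rpow_pos _ hA).le, ← rpow_mul (hA x).le,
    one_div_mul_cancel hR, rpow_one]

lemma log_sum_rpow_one_sub_mul_eq {R : ℝ} (hR0 : R ≠ 0) (hR1 : R ≠ 1) (hA : ∀ x, 0 < A x)
    {b : X → ℝ} (hb : ∀ x, 0 < b x) :
    1 / (1 - R) * log (∑ x, b x ^ (1 - R) * A x)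
      = R / (1 - R) * log (∑ x, A x ^ (1 / R)) - renyiDiv R (escort (1 / R) A) b := by
  set S := ∑ x, A x ^ (1 / R)
  have hS : 0 < S := sum_rpow_pos _ hA
  have hsplit :
      ∑ x, b x ^ (1 - R) * A x = S ^ R * ∑ x, escort (1 / R) A x ^ R * b x ^ (1 - R) := by
    rw [mul_sum]
    refine sum_congr rfl fun x _ => ?_
    rw [escort_one_div_rpow hR0 hA, div_mul_eq_mul_div, mul_div_assoc',
      mul_div_cancel_left₀ _ (rpow_pos_of_pos hS R).ne', mul_comm]
  have hpos : 0 < ∑ x, escort (1 / R) A x ^ R * b x ^ (1 - R) :=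
    sum_pos (fun x _ => mul_pos (rpow_pos_of_pos (escort_pos _ hA x) _)
      (rpow_pos_of_pos (hb x) _)) univ_nonempty
  rw [hsplit, log_mul (rpow_pos_of_pos hS R).ne' hpos.ne', log_rpow hS, renyiDiv]
  field_simp
  ring

end Escort

lemma sum_sum_mul_rpow_mul_eq {X Y : Type*} [Fintype X] [Fintype Y] (t : ℝ) {b : X → ℝ}
    {o p : X → Y → ℝ} (hb : ∀ x, 0 ≤ b x) (ho : ∀ x y, 0 ≤ o x y) :
    ∑ x, ∑ y, (b x * o x y) ^ t * p x y = ∑ x, b x ^ t * ∑ y, p x y * o x y ^ t := by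
  refine sum_congr rfl fun x _ => ?_
  rw [mul_sum]
  refine sum_congr rfl fun y _ => ?_
  rw [mul_rpow (hb x) (ho x y)]
  ring

-- The left-hand side is `D^{n1}_{1/R}(p_{X|Y}‖r_{X|Y}|p_Y)` with `r = o⁻¹`.
lemma condRenyiDivN1_inv_eq {X Y : Type*} [Fintype X] [Fintype Y] [Nonempty X] {R : ℝ}
    (hR : R ≠ 0) {p o : X → Y → ℝ} (hp : ∀ x y, 0 < p x y) (ho : ∀ x y, 0 ≤ o x y) :
    (1 / (1 / R - 1)) * log (∑ x, (∑ y, (∑ x', p x' y) * (p x y / ∑ x', p x' y) *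
        ((o x y)⁻¹) ^ ((1 - 1 / R) / (1 / R))) ^ (1 / R))
      = R / (1 - R) * log (∑ x, (∑ y, p x y * o x y ^ (1 - R)) ^ (1 / R)) := by
  have hexp : (1 - 1 / R) / (1 / R) = -(1 - R) := by field_simp; ring
  have hterm : ∀ x y,
      (∑ x', p x' y) * (p x y / ∑ x', p x' y) * (o x y)⁻¹ ^ ((1 - 1 / R) / (1 / R))
        = p x y * o x y ^ (1 - R) := fun x y => by
    rw [mul_div_cancel₀ _ (sum_pos (fun x' _ => hp x' y) univ_nonempty).ne', hexp,
      inv_rpow (ho x y), ← rpow_neg (ho x y), neg_neg]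
  have hcoef : 1 / (1 / R - 1) = R / (1 - R) := by field_simp
  simp_rw [hterm, hcoef]

theorem bookmaker_side_info_optimal_bet_general
    {X Y : Type} [Fintype X] [Fintype Y] [Nonempty X] [Nonempty Y]
    (R : ℝ) (hR0 : 0 < R) (hR1 : R ≠ 1)
    (p : X → Y → ℝ) (o : X → Y → ℝ)
    (hp_pos : ∀ x y, 0 < p x y)
    (ho_pos : ∀ x y, 0 < o x y) :
    IsGreatest
      {w : ℝ | ∃ b : X → ℝ, (∀ x, 0 < b x) ∧ (∑ x, b x = 1) ∧
        w = (1 / (1 - R)) * Real.log (∑ x, ∑ y, (b x * o x y) ^ (1 - R) * p x y)}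
      ((1 / (1 / R - 1)) *
        Real.log (∑ x, (∑ y, (∑ x', p x' y) * (p x y / ∑ x', p x' y) *
          ((o x y)⁻¹) ^ ((1 - 1 / R) / (1 / R))) ^ (1 / R)))
    ∧
    (1 / (1 - R)) * Real.log (∑ x, ∑ y,
        (((∑ y', p x y' * (o x y') ^ (1 - R)) ^ (1 / R) /
          ∑ x', (∑ y', p x' y' * (o x' y') ^ (1 - R)) ^ (1 / R)) * o x y) ^ (1 - R) * p x y)
      = (1 / (1 / R - 1)) *
        Real.log (∑ x, (∑ y, (∑ x', p x' y) * (p x y / ∑ x', p x' y) *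
          ((o x y)⁻¹) ^ ((1 - 1 / R) / (1 / R))) ^ (1 / R)) := by
  set A : X → ℝ := fun x => ∑ y, p x y * o x y ^ (1 - R)
  have hA : ∀ x, 0 < A x := fun x =>
    sum_pos (fun y _ => mul_pos (hp_pos x y) (rpow_pos_of_pos (ho_pos x y) _)) univ_nonempty
  have hvalue : ∀ b : X → ℝ, (∀ x, 0 < b x) →
      1 / (1 - R) * log (∑ x, ∑ y, (b x * o x y) ^ (1 - R) * p x y)
        = R / (1 - R) * log (∑ x, A x ^ (1 / R)) - renyiDiv R (escort (1 / R) A) b :=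
    fun b hb => by
      rw [sum_sum_mul_rpow_mul_eq _ (fun x => (hb x).le) (fun x y => (ho_pos x y).le),
        log_sum_rpow_one_sub_mul_eq hR0.ne' hR1 hA hb]
  have hescort_value := hvalue (escort (1 / R) A) (escort_pos _ hA)
  rw [renyiDiv_self _ (escort_pos _ hA) (sum_escort _ hA), sub_zero] at hescort_value
  rw [condRenyiDivN1_inv_eq hR0.ne' hp_pos fun x y => (ho_pos x y).le]
  refine ⟨⟨⟨escort (1 / R) A, escort_pos _ hA, sum_escort _ hA, hescort_value.symm⟩, ?_⟩,
    hescort_value⟩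
  rintro w ⟨b, hb, hb1, rfl⟩
  rw [hvalue b hb]
  exact sub_le_self _ (renyiDiv_nonneg hR0.le (fun x => (escort_pos _ hA x).le) hb
    (sum_escort _ hA) hb1)

/-- Optimal bet against a bookmaker with side information.
For `R ∈ (0,1) ∪ (1,∞)`, positive fair odds `o_{X|Y}` and a strictly positive
joint PMF `p_{XY}`, the maximum over betting PMFs `b_X` of the log isoelastic
certainty equivalent `(1/(1−R)) ln[Σ_{x,y} (b(x)o(x|y))^{1−R} p(x,y)]` equals
`D^{n1}_{1/R}(p_{X|Y}‖r_{X|Y}|p_Y)` (with `r(x|y) = o(x|y)⁻¹`), attained at the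
betting strategy `b_X = h_X`, where
`h(x) = (Σ_y p(x,y) o(x|y)^{1−R})^{1/R} / Σ_{x'} (Σ_y p(x',y) o(x'|y)^{1−R})^{1/R}`. -/
theorem bookmaker_side_info_optimal_bet
    {X Y : Type} [Fintype X] [Fintype Y] [Nonempty X] [Nonempty Y]
    (R : ℝ) (hR0 : 0 < R) (hR1 : R ≠ 1)
    (p : X → Y → ℝ) (o : X → Y → ℝ)
    (hp_pos : ∀ x y, 0 < p x y) (hp_sum : ∑ x, ∑ y, p x y = 1)
    (ho_pos : ∀ x y, 0 < o x y) (ho_fair : ∀ y, ∑ x, (o x y)⁻¹ = 1) :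
    IsGreatest
      {w : ℝ | ∃ b : X → ℝ, (∀ x, 0 < b x) ∧ (∑ x, b x = 1) ∧
        w = (1 / (1 - R)) * Real.log (∑ x, ∑ y, (b x * o x y) ^ (1 - R) * p x y)}
      ((1 / (1 / R - 1)) *
        Real.log (∑ x, (∑ y, (∑ x', p x' y) * (p x y / ∑ x', p x' y) *
          ((o x y)⁻¹) ^ ((1 - 1 / R) / (1 / R))) ^ (1 / R)))
    ∧
    (1 / (1 - R)) * Real.log (∑ x, ∑ y,
        (((∑ y', p x y' * (o x y') ^ (1 - R)) ^ (1 / R) /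
          ∑ x', (∑ y', p x' y' * (o x' y') ^ (1 - R)) ^ (1 / R)) * o x y) ^ (1 - R) * p x y)
      = (1 / (1 / R - 1)) *
        Real.log (∑ x, (∑ y, (∑ x', p x' y) * (p x y / ∑ x', p x' y) *
          ((o x y)⁻¹) ^ ((1 - 1 / R) / (1 / R))) ^ (1 / R)) :=
  bookmaker_side_info_optimal_bet_general R hR0 hR1 p o hp_pos ho_pos
end

section
/- Side information directly given to the gambler is at least as valuable as side information given only to the bookmaker: for R ∈ [1, ∞) (equivalently order α = 1/R ∈ (0,1]), conditional PMFs p_{X|G}, r_{X|G} with positive entries and PMF p_G, D^{BLP}_{1/R}(p_{X|G}||r_{X|G}|p_G) ≥ D^{n1}_{1/R}(p_{X|G}||r_{X|G}|p_G). -/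
/-!
With `α ∈ (0, 1]` and `u x g = p(x|g) q(x|g)^((1-α)/α)`, the inequality amounts to
`(∑_g p(g) ‖u(·|g)‖_α)^α ≤ ‖∑_g p(g) u(·|g)‖_α^α`, because the factor `1/(α-1)` in front of both
logarithms is nonpositive. This reverse triangle inequality for the `α`-quasinorm is Minkowski's
inequality with exponent `1/α ≥ 1`, applied to the functions `g ↦ (p(g) u(x|g))^α`, one for each `x`.
-/

open Finset Real

theorem Lp_finsetSum_le_of_nonneg {ι κ : Type*} [Fintype κ] (s : Finset ι) (f : ι → κ → ℝ)
    (hf : ∀ i k, 0 ≤ f i k) {p : ℝ} (hp : 1 ≤ p) :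
    (∑ k, (∑ i ∈ s, f i k) ^ p) ^ (1 / p) ≤ ∑ i ∈ s, (∑ k, f i k ^ p) ^ (1 / p) := by
  classical
  induction s using Finset.induction_on with
  | empty => simp [zero_rpow (by positivity : p ≠ 0), zero_rpow (by positivity : p⁻¹ ≠ 0)]
  | insert a s ha ih =>
    simp only [sum_insert ha]
    calc _ ≤ (∑ k, f a k ^ p) ^ (1 / p) + (∑ k, (∑ i ∈ s, f i k) ^ p) ^ (1 / p) :=
          Lp_add_le_of_nonneg univ hp (fun k _ => hf a k) (fun k _ => sum_nonneg fun i _ => hf i k)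
      _ ≤ _ := by gcongr

theorem rpow_sum_Lp_le_sum_rpow_sum_of_le_one {ι κ : Type*} [Fintype ι] [Fintype κ]
    (f : ι → κ → ℝ) (hf : ∀ i k, 0 ≤ f i k) {α : ℝ} (hα0 : 0 < α) (hα1 : α ≤ 1) :
    (∑ i, (∑ k, f i k ^ α) ^ (1 / α)) ^ α ≤ ∑ k, (∑ i, f i k) ^ α := by
  have h := Lp_finsetSum_le_of_nonneg univ (fun k i => f i k ^ α)
    (fun k i => rpow_nonneg (hf i k) α) (one_le_one_div hα0 hα1)
  simp only [one_div_one_div] at h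
  convert h using 4 with k _ i
  rw [← rpow_mul (hf i k), mul_one_div_cancel hα0.ne', rpow_one]

section CondRenyi

variable {X G : Type*} [Fintype X] [Fintype G]

/-- `p x g` stands for `p(x|g)`; `pG` is the law of the side information `G`. -/
noncomputable def condRenyiBLP (α : ℝ) (p q : X → G → ℝ) (pG : G → ℝ) : ℝ :=
  (α / (α - 1)) * Real.log (∑ g, pG g * (∑ x, p x g ^ α * q x g ^ (1 - α)) ^ (1 / α))

noncomputable def condRenyiN1 (α : ℝ) (p q : X → G → ℝ) (pG : G → ℝ) : ℝ :=
  (1 / (α - 1)) * Real.log (∑ x, (∑ g, pG g * p x g * q x g ^ ((1 - α) / α)) ^ α)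

theorem rpow_mul_mul_rpow_div {a b c α : ℝ} (ha : 0 ≤ a) (hb : 0 ≤ b) (hc : 0 ≤ c) (hα : α ≠ 0) :
    (a * b * c ^ ((1 - α) / α)) ^ α = a ^ α * (b ^ α * c ^ (1 - α)) := by
  rw [mul_assoc, mul_rpow ha (by positivity), mul_rpow hb (by positivity), ← rpow_mul hc,
    div_mul_cancel₀ _ hα]

theorem condRenyiN1_le_condRenyiBLP [Nonempty X] [Nonempty G] {α : ℝ} (hα0 : 0 < α)
    (hα1 : α ≤ 1) {p q : X → G → ℝ} {pG : G → ℝ} (hp : ∀ x g, 0 < p x g)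
    (hq : ∀ x g, 0 < q x g) (hpG : ∀ g, 0 < pG g) :
    condRenyiN1 α p q pG ≤ condRenyiBLP α p q pG := by
  set S := ∑ g, pG g * (∑ x, p x g ^ α * q x g ^ (1 - α)) ^ (1 / α)
  set N := ∑ x, (∑ g, pG g * p x g * q x g ^ ((1 - α) / α)) ^ α
  have hS : 0 < S := sum_pos (fun g _ => by
    have := hpG g
    have : 0 < ∑ x, p x g ^ α * q x g ^ (1 - α) := sum_pos (fun x _ => by
      have := hp x g; have := hq x g; positivity) univ_nonempty
    positivity) univ_nonempty
  have hSN : S ^ α ≤ N := by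
    convert rpow_sum_Lp_le_sum_rpow_sum_of_le_one (fun g x => pG g * p x g * q x g ^ ((1 - α) / α))
      (fun g x => by have := hpG g; have := hp x g; have := hq x g; positivity) hα0 hα1
      using 3 with g _
    simp only [rpow_mul_mul_rpow_div (hpG g).le (hp _ g).le (hq _ g).le hα0.ne', ← mul_sum]
    rw [mul_rpow (by have := hpG g; positivity)
        (sum_nonneg fun x _ => by have := hp x g; have := hq x g; positivity),
      ← rpow_mul (hpG g).le, mul_one_div_cancel hα0.ne', rpow_one]
  have hlog : α * Real.log S ≤ Real.log N := by
    rw [← Real.log_rpow hS]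
    exact Real.log_le_log (by positivity) hSN
  have hcoef : 1 / (α - 1) ≤ 0 := div_nonpos_of_nonneg_of_nonpos zero_le_one (by linarith)
  calc condRenyiN1 α p q pG = 1 / (α - 1) * Real.log N := rfl
    _ ≤ 1 / (α - 1) * (α * Real.log S) := mul_le_mul_of_nonpos_left hlog hcoef
    _ = condRenyiBLP α p q pG := by unfold condRenyiBLP; ring

end CondRenyi

theorem BLP_ge_n1_general
    {X G : Type} [Fintype X] [Fintype G] [Nonempty X] [Nonempty G]
    (R : ℝ) (hR : 1 ≤ R)
    (cp cr : X → G → ℝ) (pG : G → ℝ)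
    (hcp_pos : ∀ x g, 0 < cp x g)
    (hcr_pos : ∀ x g, 0 < cr x g)
    (hpG_pos : ∀ g, 0 < pG g) :
    (1 / (1 / R - 1)) *
        Real.log (∑ x, (∑ g, pG g * cp x g *
          (cr x g) ^ ((1 - 1 / R) / (1 / R))) ^ (1 / R))
      ≤ ((1 / R) / (1 / R - 1)) *
        Real.log (∑ g, pG g *
          (∑ x, (cp x g) ^ (1 / R) * (cr x g) ^ (1 - 1 / R)) ^ (1 / (1 / R))) :=
  condRenyiN1_le_condRenyiBLP (by positivity) (div_le_one_of_le₀ hR (by positivity))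
    hcp_pos hcr_pos hpG_pos

/-- Side information given directly to the gambler is at least as
valuable as side information given only to the bookmaker: for risk aversion
`R ∈ [1,∞)` (i.e. order `α = 1/R ∈ (0,1]`), conditional PMFs `p_{X|G}`, `r_{X|G}`
with positive entries and a PMF `p_G`,
`D^{BLP}_{1/R}(p_{X|G}‖r_{X|G}|p_G) ≥ D^{n1}_{1/R}(p_{X|G}‖r_{X|G}|p_G)`. -/
theorem BLP_ge_n1
    {X G : Type} [Fintype X] [Fintype G] [Nonempty X] [Nonempty G]
    (R : ℝ) (hR : 1 ≤ R)
    (cp cr : X → G → ℝ) (pG : G → ℝ)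
    (hcp_pos : ∀ x g, 0 < cp x g) (hcp_sum : ∀ g, ∑ x, cp x g = 1)
    (hcr_pos : ∀ x g, 0 < cr x g) (hcr_sum : ∀ g, ∑ x, cr x g = 1)
    (hpG_pos : ∀ g, 0 < pG g) (hpG_sum : ∑ g, pG g = 1) :
    (1 / (1 / R - 1)) *
        Real.log (∑ x, (∑ g, pG g * cp x g *
          (cr x g) ^ ((1 - 1 / R) / (1 / R))) ^ (1 / R))
      ≤ ((1 / R) / (1 / R - 1)) *
        Real.log (∑ g, pG g *
          (∑ x, (cp x g) ^ (1 / R) * (cr x g) ^ (1 - 1 / R)) ^ (1 / (1 / R))) :=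
  BLP_ge_n1_general R hR cp cr pG hcp_pos hcr_pos hpG_pos
end
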